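/- arXiv:1606.06819 — 2 statements merged into one kernel-verified Lean document; each statement's English description precedes it below -/
import Mathlib

section
/- In Twyst-off, if (a,b,c) is a P position with 0 < a < c, then a < b. -/
namespace TwystOff

/-- Contraction: merge the two neighbors of an interior zero stack; delete empty end stacks. -/
def contract : List ℕ → List ℕ
  | [] => []
  | a :: t =>
    if a = 0 then contract t
    else match t with
      | [] => [a]
      | [b] => if b = 0 then [a] else [a, b]
      | b :: c :: r => if b = 0 then contract ((a + c) :: r) else a :: contract (b :: c :: r)
termination_by l => l.length

theorem contract_sum (l : List ℕ) : (contract l).sum = l.sum := by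
  induction l using contract.induct <;> rw [contract.eq_def] <;> simp_all <;> omega

/-- A raw move: remove `k > 0` tiles from an end stack, or `k` tiles from each of two
consecutive stacks; the result is then contracted. -/
def premove (p q : List ℕ) : Prop :=
  (∃ a t k, p = a :: t ∧ 0 < k ∧ k ≤ a ∧ q = contract ((a - k) :: t)) ∨
  (∃ a t k, p = t ++ [a] ∧ 0 < k ∧ k ≤ a ∧ q = contract (t ++ [a - k])) ∨
  (∃ α a b β k, p = α ++ a :: b :: β ∧ 0 < k ∧ k ≤ a ∧ k ≤ b ∧
      q = contract (α ++ (a - k) :: (b - k) :: β))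

/-- Moves of Twyst-off (positions are considered up to contraction). -/
def Move (p q : List ℕ) : Prop := premove (contract p) q

theorem Move.sum_lt {p q : List ℕ} (h : Move p q) : q.sum < p.sum := by
  rw [← contract_sum p]
  rcases h with ⟨a, t, k, hp, hk, hka, hq⟩ | ⟨a, t, k, hp, hk, hka, hq⟩ |
    ⟨α, a, b, β, k, hp, hk, hka, hkb, hq⟩ <;>
    subst hq <;> rw [contract_sum, hp] <;> simp [List.sum_append] <;> omega

/-- P positions: every option is an N position (i.e. no option is itself P). -/
def PPos (p : List ℕ) : Prop := ∀ q, Move p q → ¬ PPos q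
termination_by p.sum
decreasing_by exact Move.sum_lt (by assumption)

/-- N positions: some option is a P position. -/
def NPos (p : List ℕ) : Prop := ∃ q, Move p q ∧ PPos q

end TwystOff

/-!
Induction on `x + y + z`: if `0 < x < z`, `y ≤ x` and `(x, y, z)` were P, its option
`(x, y, x)` would be N. But every option of `(x, y, x)` is, up to reversing the row, either an
option of `(x, y, z)`, a single nonempty stack, or a smaller position `(x - k, y - k, x)` of the
same shape, so all of them are N.
-/

namespace TwystOff

theorem contract_eq_self {l : List ℕ} (hl : ∀ x ∈ l, x ≠ 0) : contract l = l := by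
  induction l using contract.induct <;> rw [contract.eq_def] <;> simp_all

theorem contract_zero_mid (a c : ℕ) : contract [a, 0, c] = contract [a + c] := by
  simp only [contract]
  split_ifs <;> simp_all

theorem length_contract_le (l : List ℕ) : (contract l).length ≤ l.length := by
  induction l using contract.induct <;> rw [contract.eq_def] <;> simp_all <;> omega

theorem contract_reverse {l : List ℕ} (hl : l.length ≤ 3) :
    contract l.reverse = (contract l).reverse := by
  match l with
  | [] => simp [contract]
  | [_] | [_, _] | [_, _, _] =>
    simp only [List.reverse_cons, List.reverse_nil, List.nil_append, List.cons_append, contract]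
    split_ifs <;> simp_all <;> omega

theorem PPos_congr {p p' : List ℕ} (h : contract p = contract p') : PPos p ↔ PPos p' := by
  rw [PPos, PPos]
  simp only [Move, h]

theorem premove.length_le {p q : List ℕ} (h : premove p q) : q.length ≤ p.length := by
  rcases h with ⟨a, t, k, rfl, -, -, rfl⟩ | ⟨a, t, k, rfl, -, -, rfl⟩ |
    ⟨α, a, b, β, k, rfl, -, -, -, rfl⟩ <;> exact (length_contract_le _).trans (by simp)

theorem premove.reverse {p q : List ℕ} (hp : p.length ≤ 3) (h : premove p q) :
    premove p.reverse q.reverse := by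
  rcases h with ⟨a, t, k, rfl, hk, hka, rfl⟩ | ⟨a, t, k, rfl, hk, hka, rfl⟩ |
    ⟨α, a, b, β, k, rfl, hk, hka, hkb, rfl⟩
  · refine Or.inr (Or.inl ⟨a, t.reverse, k, by simp, hk, hka, ?_⟩)
    rw [← contract_reverse (by simpa using hp)]
    simp
  · refine Or.inl ⟨a, t.reverse, k, by simp, hk, hka, ?_⟩
    rw [← contract_reverse (by simpa using hp)]
    simp
  · refine Or.inr (Or.inr ⟨β.reverse, b, a, α.reverse, k, by simp, hk, hkb, hka, ?_⟩)
    rw [← contract_reverse (by simpa using hp)]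
    simp

theorem Move.length_le {p q : List ℕ} (h : Move p q) : q.length ≤ p.length :=
  (premove.length_le h).trans (length_contract_le p)

theorem Move.reverse {p q : List ℕ} (hp : p.length ≤ 3) (h : Move p q) :
    Move p.reverse q.reverse := by
  rw [Move, contract_reverse hp]
  exact premove.reverse ((length_contract_le p).trans hp) h

theorem PPos.reverse {p : List ℕ} (hp : p.length ≤ 3) (h : PPos p) : PPos p.reverse := by
  rw [PPos]
  intro q hq hPq
  have hmove : Move p q.reverse := by simpa using hq.reverse (by simpa using hp)
  have hsum : q.sum < p.sum := by simpa using hq.sum_lt -- the termination measure decreases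
  rw [PPos] at h
  exact h _ hmove (hPq.reverse ((hq.length_le).trans (by simpa using hp)))
termination_by p.sum

theorem PPos_nil : PPos [] := by
  rw [PPos]
  rintro q (⟨a, t, k, hp, -⟩ | ⟨a, t, k, hp, -⟩ | ⟨α, a, b, β, k, hp, -⟩) <;> simp [contract] at hp

theorem not_PPos_singleton {m : ℕ} (hm : m ≠ 0) : ¬ PPos [m] := by
  intro h
  rw [PPos] at h
  refine h [] (Or.inl ⟨m, [], m, ?_, by omega, le_rfl, ?_⟩) PPos_nil
  · exact contract_eq_self (by simpa using hm)
  · simp [contract]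

theorem Move.three_right {a b c t : ℕ} (ha : a ≠ 0) (hb : b ≠ 0) (htc : t < c) :
    Move [a, b, c] (contract [a, b, t]) := by
  refine Or.inr (Or.inl ⟨c, [a, b], c - t, ?_, by omega, by omega, ?_⟩)
  · exact contract_eq_self (by simp [ha, hb]; omega)
  · simp [Nat.sub_sub_self htc.le]

theorem Move.three_cases {a b c : ℕ} {q : List ℕ} (ha : a ≠ 0) (hb : b ≠ 0) (hc : c ≠ 0)
    (h : Move [a, b, c] q) :
    (∃ t < c, q = contract [a, b, t]) ∨ (∃ s < a, q = contract [s, b, c]) ∨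
      (∃ k, 0 < k ∧ k ≤ a ∧ k ≤ b ∧ q = contract [a - k, b - k, c]) ∨
      (∃ k, 0 < k ∧ k ≤ b ∧ k ≤ c ∧ q = contract [a, b - k, c - k]) := by
  rw [Move, contract_eq_self (by simp [ha, hb, hc])] at h
  rcases h with ⟨a', t, k, hp, hk, hka, rfl⟩ | ⟨c', t, k, hp, hk, -, rfl⟩ |
    ⟨α, a', b', β, k, hp, hk, hka, hkb, rfl⟩
  · obtain ⟨rfl, rfl⟩ : a = a' ∧ [b, c] = t := by simpa using hp
    exact Or.inr (Or.inl ⟨_, by omega, rfl⟩)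
  · obtain ⟨rfl, rfl⟩ : t = [a, b] ∧ c' = c := by simpa [List.cons_eq_append_iff] using hp
    exact Or.inl ⟨_, by omega, rfl⟩
  · obtain ⟨rfl, rfl, rfl, rfl⟩ | ⟨rfl, rfl, rfl, rfl⟩ :
        (α = [] ∧ a' = a ∧ b' = b ∧ β = [c]) ∨ (α = [a] ∧ a' = b ∧ b' = c ∧ β = []) := by
      simpa [List.cons_eq_append_iff] using hp
    · exact Or.inr (Or.inr (Or.inl ⟨k, hk, hka, hkb, rfl⟩))
    · exact Or.inr (Or.inr (Or.inr ⟨k, hk, hka, hkb, rfl⟩))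

theorem PPos.contract_reverse {l : List ℕ} (hl : l.length ≤ 3) (h : PPos (contract l)) :
    PPos (contract l.reverse) := by
  rw [TwystOff.contract_reverse hl]
  exact h.reverse ((length_contract_le l).trans hl)

theorem not_PPos_three_of_le {x y z : ℕ} (hx : 0 < x) (hxz : x < z) (hyx : y ≤ x) :
    ¬ PPos [x, y, z] := by
  intro hP
  obtain rfl | hy := Nat.eq_zero_or_pos y
  · rw [PPos_congr (contract_zero_mid x z)] at hP
    exact not_PPos_singleton (by omega) hP
  have hopt : ∀ t < z, ¬ PPos (contract [x, y, t]) := by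
    rw [PPos] at hP
    exact fun t ht => hP _ (Move.three_right hx.ne' hy.ne' ht)
  have hdiag : ∀ k, 0 < k → k ≤ y → ¬ PPos (contract [x - k, y - k, x]) := by
    intro k hk hky
    obtain rfl | hky := hky.eq_or_lt
    · rw [Nat.sub_self, contract_zero_mid, contract_eq_self (by simp; omega)]
      exact not_PPos_singleton (by omega)
    · have hsum : x - k + (y - k) + x < x + y + z := by omega -- the termination measure decreases
      rw [contract_eq_self (by simp; omega)]
      exact not_PPos_three_of_le (by omega) (by omega) (by omega)
  have hxyx : ¬ PPos [x, y, x] := by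
    simpa [contract_eq_self (l := [x, y, x]) (by simp; omega)] using hopt x hxz
  apply hxyx
  rw [PPos]
  intro q hq hPq
  rcases hq.three_cases hx.ne' hy.ne' hx.ne' with
    ⟨t, ht, rfl⟩ | ⟨s, hs, rfl⟩ | ⟨k, hk, -, hky, rfl⟩ | ⟨k, hk, hky, -, rfl⟩
  · exact hopt t (ht.trans hxz) hPq
  · exact hopt s (hs.trans hxz) (by simpa using hPq.contract_reverse (by simp))
  · exact hdiag k hk hky hPq
  · exact hdiag k hk hky (by simpa using hPq.contract_reverse (by simp))
termination_by x + y + z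

end TwystOff

theorem nonpalindrome_a_lt_b (a b c : ℕ) (h : TwystOff.PPos [a, b, c])
    (ha : 0 < a) (hac : a < c) : a < b := by
  by_contra! hba
  exact TwystOff.not_PPos_three_of_le ha hac hba h
end

section
/- In Twyst-off, if a is a positive integer and b > ⌈φ²a⌉ where φ = (1+√5)/2, then the position (a,b,a) is a P position. -/
noncomputable def phi : ℝ := (1 + Real.sqrt 5) / 2

/-!
Between two stacks Twyst-off is Wythoff's game, so by Rayleigh's theorem for the complementary
Beatty sequences `⌊nφ⌋` and `⌊nφ²⌋ = ⌊nφ⌋ + n` its P positions are the pairs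
`(⌊nφ⌋, ⌊nφ⌋ + n)` in either order. For `(a, b, a)` with `b > ⌈φ²a⌉` the second player mirrors:
a move that leaves three stacks is answered on the other side, which gives `(a', b', a')` with
`b' > ⌈φ²a'⌉` because `φ² > 2`; a move that empties an end stack leaves `(c, a)` with `c` larger
than the Wythoff partner of `a`, and moving to that partner wins.
-/

namespace TwystOff

@[simp] lemma contract_nil : contract [] = [] := by simp [contract]

@[simp] lemma contract_cons_zero (l : List ℕ) : contract (0 :: l) = contract l := by
  rw [contract.eq_def]; simp

@[simp] lemma contract_pair_zero (x : ℕ) : contract [x, 0] = contract [x] := by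
  rcases Nat.eq_zero_or_pos x with rfl | hx <;> simp [contract, *]

lemma contract_singleton {x : ℕ} (hx : 0 < x) : contract [x] = [x] := by
  simp [contract, hx.ne']

lemma contract_pair {x y : ℕ} (hx : 0 < x) (hy : 0 < y) : contract [x, y] = [x, y] := by
  simp [contract, hx.ne', hy.ne']

lemma contract_triple {x y z : ℕ} (hx : 0 < x) (hy : 0 < y) (hz : 0 < z) :
    contract [x, y, z] = [x, y, z] := by
  simp [contract, hx.ne', hy.ne', hz.ne']

lemma contract_triple_zero {x y : ℕ} (hx : 0 < x) (hy : 0 < y) :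
    contract [x, y, 0] = [x, y] := by
  simp [contract, hx.ne', hy.ne']

lemma contract_of_forall_pos {l : List ℕ} (h : ∀ x ∈ l, 0 < x) : contract l = l := by
  induction l with
  | nil => exact contract_nil
  | cons a t ih =>
    rcases t with _ | ⟨b, _ | ⟨c, r⟩⟩
    · simp [contract, (h a (by simp)).ne']
    · simp [contract, (h a (by simp)).ne', (h b (by simp)).ne']
    · rw [contract, if_neg (h a (by simp)).ne', if_neg (h b (by simp)).ne',
        ih fun x hx => h x (List.mem_cons_of_mem a hx)]

lemma pos_of_mem_contract (l : List ℕ) : ∀ x ∈ contract l, 0 < x := by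
  induction l using contract.induct <;> rw [contract.eq_def] <;> simp_all <;> omega

@[simp] lemma contract_contract (l : List ℕ) : contract (contract l) = contract l :=
  contract_of_forall_pos (pos_of_mem_contract l)

lemma PPos_contract (l : List ℕ) : PPos (contract l) ↔ PPos l := by
  rw [PPos, PPos]
  simp only [Move, contract_contract]

lemma not_PPos_of_move {p q : List ℕ} (h : Move p q) (hq : PPos q) : ¬ PPos p := by
  rw [PPos]
  exact fun hp => hp q h hq

def WythoffMove (x y x' y' : ℕ) : Prop :=
  (x' < x ∧ y' = y) ∨ (x' = x ∧ y' < y) ∨ (x' < x ∧ x' + y = x + y')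

lemma WythoffMove.swap {x y x' y' : ℕ} (h : WythoffMove x y x' y') : WythoffMove y x y' x' := by
  unfold WythoffMove at *; omega

lemma WythoffMove.add_lt {x y x' y' : ℕ} (h : WythoffMove x y x' y') : x' + y' < x + y := by
  unfold WythoffMove at h; omega

lemma not_premove_nil (q : List ℕ) : ¬ premove [] q := by
  rintro (⟨a, t, k, hp, -⟩ | ⟨a, t, k, hp, -⟩ | ⟨α, a, b, β, k, hp, -⟩) <;> simp at hp

lemma premove_singleton_iff {x : ℕ} {q : List ℕ} :
    premove [x] q ↔ ∃ x' < x, q = contract [x'] := by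
  constructor
  · rintro (⟨a, t, k, hp, hk, hka, rfl⟩ | ⟨a, t, k, hp, hk, hka, rfl⟩ |
      ⟨α, a, b, β, k, hp, -⟩)
    · simp only [List.cons.injEq] at hp
      obtain ⟨rfl, rfl⟩ := hp
      exact ⟨x - k, by omega, rfl⟩
    · rcases t with _ | ⟨u, t⟩ <;> simp at hp
      subst hp
      exact ⟨x - k, by omega, rfl⟩
    · rcases α with _ | ⟨u, α⟩ <;> simp at hp
  · rintro ⟨x', hx', rfl⟩
    exact Or.inl ⟨x, [], x - x', rfl, by omega, by omega, by rw [Nat.sub_sub_self hx'.le]⟩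

lemma premove_pair_iff {x y : ℕ} {q : List ℕ} :
    premove [x, y] q ↔ ∃ x' y', WythoffMove x y x' y' ∧ q = contract [x', y'] := by
  constructor
  · rintro (⟨a, t, k, hp, hk, hka, rfl⟩ | ⟨a, t, k, hp, hk, hka, rfl⟩ |
      ⟨α, a, b, β, k, hp, hk, hka, hkb, rfl⟩)
    · simp only [List.cons.injEq] at hp
      obtain ⟨rfl, rfl⟩ := hp
      exact ⟨x - k, y, Or.inl ⟨by omega, rfl⟩, rfl⟩
    · rcases t with _ | ⟨u, _ | ⟨v, t⟩⟩ <;> simp at hp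
      obtain ⟨rfl, rfl⟩ := hp
      exact ⟨x, y - k, Or.inr (Or.inl ⟨rfl, by omega⟩), rfl⟩
    · rcases α with _ | ⟨u, _ | ⟨v, α⟩⟩ <;> simp at hp
      obtain ⟨rfl, rfl, rfl⟩ := hp
      exact ⟨x - k, y - k, Or.inr (Or.inr ⟨by omega, by omega⟩), rfl⟩
  · rintro ⟨x', y', hm, rfl⟩
    rcases hm with ⟨h, rfl⟩ | ⟨rfl, h⟩ | ⟨h, h'⟩
    · exact Or.inl ⟨x, [y'], x - x', rfl, by omega, by omega, by rw [Nat.sub_sub_self h.le]⟩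
    · exact Or.inr (Or.inl ⟨y, [x'], y - y', rfl, by omega, by omega, by
        rw [Nat.sub_sub_self h.le]; rfl⟩)
    · exact Or.inr (Or.inr ⟨[], x, y, [], x - x', rfl, by omega, by omega, by omega, by
        rw [Nat.sub_sub_self h.le, (by omega : y - (x - x') = y')]; rfl⟩)

lemma premove_triple_iff {x y z : ℕ} {q : List ℕ} :
    premove [x, y, z] q ↔
      (∃ k, 0 < k ∧ k ≤ x ∧ q = contract [x - k, y, z]) ∨
      (∃ k, 0 < k ∧ k ≤ z ∧ q = contract [x, y, z - k]) ∨
      (∃ k, 0 < k ∧ k ≤ x ∧ k ≤ y ∧ q = contract [x - k, y - k, z]) ∨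
      (∃ k, 0 < k ∧ k ≤ y ∧ k ≤ z ∧ q = contract [x, y - k, z - k]) := by
  constructor
  · rintro (⟨a, t, k, hp, hk, hka, rfl⟩ | ⟨a, t, k, hp, hk, hka, rfl⟩ |
      ⟨α, a, b, β, k, hp, hk, hka, hkb, rfl⟩)
    · simp only [List.cons.injEq] at hp
      obtain ⟨rfl, rfl⟩ := hp
      exact Or.inl ⟨k, hk, hka, rfl⟩
    · rcases t with _ | ⟨u, _ | ⟨v, _ | ⟨w, t⟩⟩⟩ <;> simp at hp
      obtain ⟨rfl, rfl, rfl⟩ := hp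
      exact Or.inr (Or.inl ⟨k, hk, hka, rfl⟩)
    · rcases α with _ | ⟨u, _ | ⟨v, _ | ⟨w, α⟩⟩⟩ <;> simp at hp
      · obtain ⟨rfl, rfl, rfl⟩ := hp
        exact Or.inr (Or.inr (Or.inl ⟨k, hk, hka, hkb, rfl⟩))
      · obtain ⟨rfl, rfl, rfl, rfl⟩ := hp
        exact Or.inr (Or.inr (Or.inr ⟨k, hk, hka, hkb, rfl⟩))
  · rintro (⟨k, hk, hkx, rfl⟩ | ⟨k, hk, hkz, rfl⟩ | ⟨k, hk, hkx, hky, rfl⟩ |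
      ⟨k, hk, hky, hkz, rfl⟩)
    · exact Or.inl ⟨x, [y, z], k, rfl, hk, hkx, rfl⟩
    · exact Or.inr (Or.inl ⟨z, [x, y], k, rfl, hk, hkz, rfl⟩)
    · exact Or.inr (Or.inr ⟨[], x, y, [z], k, rfl, hk, hkx, hky, rfl⟩)
    · exact Or.inr (Or.inr ⟨[x], y, z, [], k, rfl, hk, hky, hkz, rfl⟩)

lemma move_pair_iff {x y : ℕ} {q : List ℕ} :
    Move [x, y] q ↔ ∃ x' y', WythoffMove x y x' y' ∧ q = contract [x', y'] := by
  rw [Move]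
  rcases Nat.eq_zero_or_pos x with rfl | hx <;> rcases Nat.eq_zero_or_pos y with rfl | hy
  · simp only [contract_cons_zero, contract_nil, WythoffMove, not_lt_zero, false_and, and_false,
      or_false, exists_false, iff_false]
    exact not_premove_nil q
  · rw [contract_cons_zero, contract_singleton hy, premove_singleton_iff]
    constructor
    · rintro ⟨y', hy', rfl⟩
      exact ⟨0, y', Or.inr (Or.inl ⟨rfl, hy'⟩), by simp⟩
    · rintro ⟨x', y', hm, rfl⟩
      obtain ⟨rfl, hy'⟩ : x' = 0 ∧ y' < y := by unfold WythoffMove at hm; omega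
      exact ⟨y', hy', by simp⟩
  · rw [contract_pair_zero, contract_singleton hx, premove_singleton_iff]
    constructor
    · rintro ⟨x', hx', rfl⟩
      exact ⟨x', 0, Or.inl ⟨hx', rfl⟩, by simp⟩
    · rintro ⟨x', y', hm, rfl⟩
      obtain ⟨hx', rfl⟩ : x' < x ∧ y' = 0 := by unfold WythoffMove at hm; omega
      exact ⟨x', hx', by simp⟩
  · rw [contract_pair hx hy, premove_pair_iff]

lemma move_triple_iff {x y z : ℕ} {q : List ℕ} (hx : 0 < x) (hy : 0 < y) (hz : 0 < z) :
    Move [x, y, z] q ↔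
      (∃ k, 0 < k ∧ k ≤ x ∧ q = contract [x - k, y, z]) ∨
      (∃ k, 0 < k ∧ k ≤ z ∧ q = contract [x, y, z - k]) ∨
      (∃ k, 0 < k ∧ k ≤ x ∧ k ≤ y ∧ q = contract [x - k, y - k, z]) ∨
      (∃ k, 0 < k ∧ k ≤ y ∧ k ≤ z ∧ q = contract [x, y - k, z - k]) := by
  rw [Move, contract_triple hx hy hz, premove_triple_iff]

section Wythoff

open Real

lemma one_lt_phi : 1 < phi := one_lt_goldenRatio

lemma phi_pos : 0 < phi := goldenRatio_pos

lemma phi_sq : phi ^ 2 = phi + 1 := goldenRatio_sq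

lemma irrational_phi : Irrational phi := goldenRatio_irrational

lemma holderConjugate_phi_phi_sq : phi.HolderConjugate (phi ^ 2) := by
  refine holderConjugate_iff.mpr ⟨one_lt_phi, ?_⟩
  have := one_lt_phi
  field_simp
  linarith [phi_sq]

noncomputable def lowerWythoff (n : ℕ) : ℕ := ⌊n * phi⌋₊

@[simp] lemma lowerWythoff_zero : lowerWythoff 0 = 0 := by simp [lowerWythoff]

lemma lowerWythoff_strictMono : StrictMono lowerWythoff := by
  refine strictMono_nat_of_lt_succ fun n => ?_
  have h : (n : ℝ) * phi + 1 ≤ (n + 1 : ℕ) * phi := by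
    push_cast; linarith [one_lt_phi]
  calc lowerWythoff n < ⌊(n : ℝ) * phi + 1⌋₊ := by
        rw [lowerWythoff, Nat.floor_add_one (mul_nonneg n.cast_nonneg phi_pos.le)]; omega
    _ ≤ lowerWythoff (n + 1) := Nat.floor_mono h

lemma beattySeq_phi_natCast (n : ℕ) : beattySeq phi n = lowerWythoff n := by
  rw [beattySeq, lowerWythoff, Int.natCast_floor_eq_floor (mul_nonneg n.cast_nonneg phi_pos.le),
    Int.cast_natCast]

lemma beattySeq_phi_sq_natCast (n : ℕ) : beattySeq (phi ^ 2) n = lowerWythoff n + n := by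
  rw [← beattySeq_phi_natCast, beattySeq, beattySeq, phi_sq, mul_add_one, Int.floor_add_intCast]

lemma mem_beattySeq_pos_iff {r : ℝ} {f : ℕ → ℕ} (hf : ∀ n : ℕ, beattySeq r n = f n)
    (m : ℕ) :
    (m : ℤ) ∈ {beattySeq r k | k > 0} ↔ ∃ n > 0, f n = m := by
  constructor
  · rintro ⟨k, hk, hkm⟩
    lift k to ℕ using hk.le
    exact ⟨k, by exact_mod_cast hk, by rw [← Nat.cast_inj (R := ℤ), ← hf, hkm]⟩
  · rintro ⟨n, hn, rfl⟩
    exact ⟨n, by exact_mod_cast hn, hf n⟩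

open scoped symmDiff in
lemma xor_lowerWythoff {m : ℕ} (hm : 0 < m) :
    Xor (∃ n > 0, lowerWythoff n = m) (∃ n > 0, lowerWythoff n + n = m) := by
  have h := Set.ext_iff.mp
    (irrational_phi.beattySeq_symmDiff_beattySeq_pos holderConjugate_phi_phi_sq) m
  simp only [Set.mem_symmDiff, Set.mem_ofPred_eq, Nat.cast_pos, hm, iff_true,
    mem_beattySeq_pos_iff beattySeq_phi_natCast,
    mem_beattySeq_pos_iff beattySeq_phi_sq_natCast] at h
  exact h

end Wythoff

lemma exists_eq_lowerWythoff_or (m : ℕ) :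
    ∃ n, m = lowerWythoff n ∨ m = lowerWythoff n + n := by
  rcases Nat.eq_zero_or_pos m with rfl | hm
  · exact ⟨0, Or.inl lowerWythoff_zero.symm⟩
  · rcases (xor_lowerWythoff hm).or with ⟨n, -, h⟩ | ⟨n, -, h⟩
    exacts [⟨n, Or.inl h.symm⟩, ⟨n, Or.inr h.symm⟩]

lemma lowerWythoff_eq_add_self_iff {m n : ℕ} :
    lowerWythoff m = lowerWythoff n + n ↔ m = 0 ∧ n = 0 := by
  refine ⟨fun h => ?_, by rintro ⟨rfl, rfl⟩; rfl⟩
  rcases Nat.eq_zero_or_pos n with rfl | hn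
  · exact ⟨lowerWythoff_strictMono.injective (by simpa using h), rfl⟩
  · have hm : 0 < lowerWythoff m := by omega
    have hm' : 0 < m := by
      by_contra! h0
      simp [Nat.le_zero.mp h0] at hm
    rcases xor_lowerWythoff hm with ⟨-, hB⟩ | ⟨-, hA⟩
    exacts [(hB ⟨n, hn, h.symm⟩).elim, (hA ⟨m, hm', rfl⟩).elim]

def IsWythoffPair (x y : ℕ) : Prop :=
  ∃ n, (x = lowerWythoff n ∧ y = lowerWythoff n + n) ∨
    (x = lowerWythoff n + n ∧ y = lowerWythoff n)

lemma IsWythoffPair.symm {x y : ℕ} (h : IsWythoffPair x y) : IsWythoffPair y x := by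
  obtain ⟨n, h | h⟩ := h
  exacts [⟨n, Or.inr h.symm⟩, ⟨n, Or.inl h.symm⟩]

lemma isWythoffPair_comm {x y : ℕ} : IsWythoffPair x y ↔ IsWythoffPair y x :=
  ⟨.symm, .symm⟩

lemma IsWythoffPair.eq_lowerWythoff_sub {x y : ℕ} (h : IsWythoffPair x y) (hxy : x ≤ y) :
    x = lowerWythoff (y - x) := by
  obtain ⟨n, ⟨rfl, rfl⟩ | ⟨rfl, rfl⟩⟩ := h
  · simp
  · obtain rfl : n = 0 := by omega
    simp

lemma IsWythoffPair.left_unique {x x' y : ℕ} (h : IsWythoffPair x y) (h' : IsWythoffPair x' y) :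
    x = x' := by
  have hB : StrictMono fun n => lowerWythoff n + n := lowerWythoff_strictMono.add strictMono_id
  obtain ⟨n, ⟨rfl, hy⟩ | ⟨rfl, hy⟩⟩ := h <;>
    obtain ⟨m, ⟨rfl, hy'⟩ | ⟨rfl, hy'⟩⟩ := h'
  · rw [hB.injective (hy.symm.trans hy')]
  · obtain ⟨rfl, rfl⟩ := lowerWythoff_eq_add_self_iff.mp (hy'.symm.trans hy)
    rfl
  · obtain ⟨rfl, rfl⟩ := lowerWythoff_eq_add_self_iff.mp (hy.symm.trans hy')
    rfl
  · rw [lowerWythoff_strictMono.injective (hy.symm.trans hy')]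

lemma IsWythoffPair.not_wythoffMove {x y x' y' : ℕ} (h : IsWythoffPair x y)
    (hm : WythoffMove x y x' y') : ¬ IsWythoffPair x' y' := by
  intro h'
  rcases hm with ⟨hx, rfl⟩ | ⟨rfl, hy⟩ | ⟨hx, hd⟩
  · exact hx.ne (h'.left_unique h)
  · exact hy.ne (h'.symm.left_unique h.symm)
  · rcases le_total x y with hxy | hyx
    · have := h.eq_lowerWythoff_sub hxy
      have := h'.eq_lowerWythoff_sub (by omega)
      rw [show y' - x' = y - x by omega] at this
      omega
    · have := h.symm.eq_lowerWythoff_sub hyx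
      have := h'.symm.eq_lowerWythoff_sub (by omega)
      rw [show x' - y' = x - y by omega] at this
      omega

lemma exists_wythoffMove_isWythoffPair {x y : ℕ} (h : ¬ IsWythoffPair x y) :
    ∃ x' y', WythoffMove x y x' y' ∧ IsWythoffPair x' y' := by
  wlog hxy : x ≤ y generalizing x y
  · obtain ⟨y', x', hm, h'⟩ := this (fun h' => h h'.symm) (by omega)
    exact ⟨x', y', hm.swap, h'.symm⟩
  obtain ⟨n, rfl | rfl⟩ := exists_eq_lowerWythoff_or x
  · obtain ⟨d, rfl⟩ := Nat.exists_eq_add_of_le hxy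
    rcases lt_trichotomy d n with hd | rfl | hd
    · exact ⟨_, _, Or.inr (Or.inr ⟨lowerWythoff_strictMono hd, by omega⟩), d, Or.inl ⟨rfl, rfl⟩⟩
    · exact absurd ⟨d, Or.inl ⟨rfl, rfl⟩⟩ h
    · exact ⟨_, _, Or.inr (Or.inl ⟨rfl, by omega⟩), n, Or.inl ⟨rfl, rfl⟩⟩
  · refine ⟨_, _, Or.inr (Or.inl ⟨rfl, ?_⟩), n, Or.inr ⟨rfl, rfl⟩⟩
    by_contra! hy
    exact h ⟨n, Or.inr ⟨rfl, by omega⟩⟩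

theorem PPos_contract_pair_iff (x y : ℕ) : PPos (contract [x, y]) ↔ IsWythoffPair x y := by
  induction hs : x + y using Nat.strong_induction_on generalizing x y with
  | _ s ih =>
  have ih' : ∀ x' y', WythoffMove x y x' y' →
      (PPos (contract [x', y']) ↔ IsWythoffPair x' y') :=
    fun x' y' hm => ih _ (hs ▸ hm.add_lt) x' y' rfl
  rw [PPos_contract, PPos]
  constructor
  · intro hP
    by_contra hW
    obtain ⟨x', y', hm, hW'⟩ := exists_wythoffMove_isWythoffPair hW
    exact hP _ (move_pair_iff.mpr ⟨x', y', hm, rfl⟩) ((ih' x' y' hm).mpr hW')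
  · intro hW q hq hPq
    obtain ⟨x', y', hm, rfl⟩ := move_pair_iff.mp hq
    exact hW.not_wythoffMove hm ((ih' x' y' hm).mp hPq)

lemma ceil_mul_add_two_mul_le {r : ℝ} (hr : 2 ≤ r) {m n : ℕ} (h : m ≤ n) :
    ⌈r * m⌉ + 2 * ((n : ℤ) - m) ≤ ⌈r * n⌉ := by
  rw [← Int.ceil_add_intCast]
  refine Int.ceil_mono ?_
  have : (m : ℝ) ≤ n := by exact_mod_cast h
  push_cast
  nlinarith

lemma two_le_phi_sq : 2 ≤ phi ^ 2 := by
  linarith [phi_sq, one_lt_phi]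

lemma two_mul_lt_of_ceil_lt {a b : ℕ} (hb : ⌈phi ^ 2 * a⌉ < b) : 2 * a < b := by
  have := ceil_mul_add_two_mul_le two_le_phi_sq (Nat.zero_le a)
  simp only [Nat.cast_zero, mul_zero, Int.ceil_zero, sub_zero, zero_add] at this
  omega

lemma not_isWythoffPair_of_ceil_lt {a b c : ℕ} (ha : 0 < a) (hb : ⌈phi ^ 2 * a⌉ < b)
    (hc : b ≤ c + a) : ¬ IsWythoffPair c a := by
  have h2a := two_mul_lt_of_ceil_lt hb
  rintro ⟨n, ⟨rfl, rfl⟩ | ⟨rfl, rfl⟩⟩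
  · omega
  · have hb' : phi ^ 2 * lowerWythoff n + 1 ≤ b := by
      have := Int.le_ceil (phi ^ 2 * lowerWythoff n)
      have : (⌈phi ^ 2 * lowerWythoff n⌉ : ℝ) + 1 ≤ b := by exact_mod_cast hb
      linarith
    have hc' : (b : ℝ) ≤ 2 * lowerWythoff n + n := by
      exact_mod_cast (by omega : b ≤ 2 * lowerWythoff n + n)
    -- `⌊nφ⌋ > nφ - 1` makes `2⌊nφ⌋ + n < φ²⌊nφ⌋ + 1`
    have hA : n * phi < lowerWythoff n + 1 := Nat.lt_floor_add_one _
    have := one_lt_phi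
    have := phi_sq
    nlinarith

lemma move_palindrome_cases {a b : ℕ} {q : List ℕ} (ha : 0 < a) (hab : 2 * a < b)
    (hq : Move [a, b, a] q) :
    (∃ a' c, 0 < a' ∧ a' < a ∧ b ≤ c + 2 * (a - a') ∧ Move q [a', c, a']) ∨
      ∃ c, b ≤ c + a ∧ (q = contract [c, a] ∨ q = contract [a, c]) := by
  rcases (move_triple_iff ha (by omega) ha).mp hq with
    ⟨k, hk, hka, rfl⟩ | ⟨k, hk, hka, rfl⟩ | ⟨k, hk, hka, -, rfl⟩ | ⟨k, hk, -, hka, rfl⟩ <;>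
    rcases hka.lt_or_eq with hka | rfl
  · refine .inl ⟨a - k, b, by omega, by omega, by omega, ?_⟩
    rw [contract_triple (by omega) (by omega) ha, move_triple_iff (by omega) (by omega) ha]
    exact .inr (.inl ⟨k, hk, hka.le, (contract_triple (by omega) (by omega) (by omega)).symm⟩)
  · exact .inr ⟨b, by omega, .inl (by simp)⟩
  · refine .inl ⟨a - k, b, by omega, by omega, by omega, ?_⟩
    rw [contract_triple ha (by omega) (by omega), move_triple_iff ha (by omega) (by omega)]
    exact .inl ⟨k, hk, hka.le, (contract_triple (by omega) (by omega) (by omega)).symm⟩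
  · exact .inr ⟨b, by omega, .inr (by rw [Nat.sub_self, contract_triple_zero ha (by omega),
      contract_pair ha (by omega)])⟩
  · refine .inl ⟨a - k, b - 2 * k, by omega, by omega, by omega, ?_⟩
    rw [contract_triple (by omega) (by omega) ha, move_triple_iff (by omega) (by omega) ha]
    refine .inr (.inr (.inr ⟨k, hk, by omega, hka.le, ?_⟩))
    rw [show b - k - k = b - 2 * k by omega, contract_triple (by omega) (by omega) (by omega)]
  · exact .inr ⟨b - k, by omega, .inl (by simp)⟩
  · refine .inl ⟨a - k, b - 2 * k, by omega, by omega, by omega, ?_⟩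
    rw [contract_triple ha (by omega) (by omega), move_triple_iff ha (by omega) (by omega)]
    refine .inr (.inr (.inl ⟨k, hk, hka.le, by omega, ?_⟩))
    rw [show b - k - k = b - 2 * k by omega, contract_triple (by omega) (by omega) (by omega)]
  · exact .inr ⟨b - k, by omega, .inr (by rw [Nat.sub_self, contract_triple_zero ha (by omega),
      contract_pair ha (by omega)])⟩

end TwystOff

theorem palindrome_P_of_large_b (a b : ℕ) (ha : 0 < a)
    (hb : ⌈phi ^ 2 * (a : ℝ)⌉ < (b : ℤ)) : TwystOff.PPos [a, b, a] := by
  induction a using Nat.strong_induction_on generalizing b with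
  | _ a ih =>
  rw [TwystOff.PPos]
  intro q hq
  rcases TwystOff.move_palindrome_cases ha (TwystOff.two_mul_lt_of_ceil_lt hb) hq with
    ⟨a', c, ha', ha'a, hc, hmove⟩ | ⟨c, hc, rfl | rfl⟩
  · refine TwystOff.not_PPos_of_move hmove (ih a' ha'a c ha' ?_)
    have := TwystOff.ceil_mul_add_two_mul_le TwystOff.two_le_phi_sq ha'a.le
    omega
  · rw [TwystOff.PPos_contract_pair_iff]
    exact TwystOff.not_isWythoffPair_of_ceil_lt ha hb hc
  · rw [TwystOff.PPos_contract_pair_iff, TwystOff.isWythoffPair_comm]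
    exact TwystOff.not_isWythoffPair_of_ceil_lt ha hb hc
end
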